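/- arXiv:2409.08707 — 6 statements merged into one kernel-verified Lean document; each statement's English description precedes it below -/
import Mathlib

section
/- Let (X,d) be a metric space and m ≥ 2. Define D_m^max(x_1,…,x_m) = max over 1 ≤ i < j ≤ m of d(x_i,x_j). Then D_m^max satisfies the polygon inequality: for any x = (x_1,…,x_m) ∈ X^m and any z ∈ X, D_m^max(x) ≤ Σ_{i=1}^m D_m^max(x[i→z]), where x[i→z] denotes the tuple x with its i-th coordinate replaced by z. -/
open Filter Metric Set

/-- Minimum pairwise distance of an `m`-tuple. -/
noncomputable def Dmin {X : Type*} [MetricSpace X] {m : ℕ} (x : Fin m → X) : ℝ :=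
  sInf {r : ℝ | ∃ i j : Fin m, i < j ∧ r = dist (x i) (x j)}

/-- Maximum pairwise distance of an `m`-tuple. -/
noncomputable def Dmax {X : Type*} [MetricSpace X] {m : ℕ} (x : Fin m → X) : ℝ :=
  sSup {r : ℝ | ∃ i j : Fin m, i < j ∧ r = dist (x i) (x j)}

/-- The Besicovitch `m`-distance of an `m`-tuple under the dynamics `φ`. -/
noncomputable def DBar {X : Type*} [MetricSpace X] {m : ℕ} (φ : X → X) (x : Fin m → X) : ℝ :=
  Filter.limsup (fun n : ℕ => (∑ i ∈ Finset.range n, Dmin (fun j => φ^[i] (x j))) / n)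
    Filter.atTop

lemma bddAbove_pairs {X : Type*} [MetricSpace X] {m : ℕ} (x : Fin m → X) :
    BddAbove {r : ℝ | ∃ i j : Fin m, i < j ∧ r = dist (x i) (x j)} := by
  apply Set.Finite.bddAbove
  apply Set.Finite.subset (Set.finite_range (fun p : Fin m × Fin m => dist (x p.1) (x p.2)))
  rintro r ⟨i, j, _, rfl⟩
  exact ⟨(i, j), rfl⟩

lemma dist_le_Dmax {X : Type*} [MetricSpace X] {m : ℕ} (x : Fin m → X) {i j : Fin m}
    (h : i ≠ j) : dist (x i) (x j) ≤ Dmax x := by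
  rcases lt_or_gt_of_ne h with hlt | hgt
  · exact le_csSup (bddAbove_pairs x) ⟨i, j, hlt, rfl⟩
  · rw [dist_comm]
    exact le_csSup (bddAbove_pairs x) ⟨j, i, hgt, rfl⟩

lemma Dmax_nonneg {X : Type*} [MetricSpace X] {m : ℕ} (hm : 2 ≤ m) (x : Fin m → X) :
    0 ≤ Dmax x := by
  have h : (⟨0, by omega⟩ : Fin m) ≠ ⟨1, by omega⟩ := by simp
  exact le_trans dist_nonneg (dist_le_Dmax x h)

theorem stmt0 {X : Type*} [MetricSpace X] {m : ℕ} (hm : 2 ≤ m)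
    (x : Fin m → X) (z : X) :
    Dmax x ≤ ∑ i : Fin m, Dmax (Function.update x i z) := by
  have hsum : ∀ {i j : Fin m}, i ≠ j →
      Dmax (Function.update x i z) + Dmax (Function.update x j z) ≤
        ∑ k : Fin m, Dmax (Function.update x k z) := by
    intro i j hij
    rw [← Finset.sum_pair (f := fun k => Dmax (Function.update x k z)) hij]
    exact Finset.sum_le_sum_of_subset_of_nonneg (Finset.subset_univ _)
      (fun k _ _ => Dmax_nonneg hm _)
  apply Real.sSup_le
  · rintro r ⟨i, j, hij, rfl⟩
    have hne : i ≠ j := ne_of_lt hij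
    have h1 : dist z (x j) ≤ Dmax (Function.update x i z) := by
      have := dist_le_Dmax (Function.update x i z) hne
      rwa [Function.update_self, Function.update_of_ne hne.symm] at this
    have h2 : dist (x i) z ≤ Dmax (Function.update x j z) := by
      have := dist_le_Dmax (Function.update x j z) hne
      rwa [Function.update_self, Function.update_of_ne hne] at this
    calc dist (x i) (x j) ≤ dist (x i) z + dist z (x j) := dist_triangle _ _ _
      _ ≤ Dmax (Function.update x j z) + Dmax (Function.update x i z) := add_le_add h2 h1
      _ ≤ ∑ k : Fin m, Dmax (Function.update x k z) := by
          rw [add_comm]; exact hsum hne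
  · exact Finset.sum_nonneg fun k _ => Dmax_nonneg hm _
end

section
/- Let (X,d) be a metric space and m ≥ 2. Define D_m(x_1,…,x_m) = min over 1 ≤ i < j ≤ m of d(x_i,x_j). Then D_m satisfies the polygon inequality: for any x = (x_1,…,x_m) ∈ X^m and any z ∈ X, D_m(x) ≤ Σ_{i=1}^m D_m(x[i→z]). -/
open Filter Metric Set

lemma Dmin_le {X : Type*} [MetricSpace X] {m : ℕ} (x : Fin m → X) {i j : Fin m}
    (h : i < j) : Dmin x ≤ dist (x i) (x j) :=
  csInf_le ⟨0, fun r ⟨a, b, _, hr⟩ => hr ▸ dist_nonneg⟩ ⟨i, j, h, rfl⟩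

lemma le_Dmin {X : Type*} [MetricSpace X] {m : ℕ} (hm : 2 ≤ m) (x : Fin m → X) {c : ℝ}
    (h : ∀ i j : Fin m, i < j → c ≤ dist (x i) (x j)) : c ≤ Dmin x :=
  le_csInf ⟨_, ⟨⟨0, by omega⟩, ⟨1, by omega⟩, by simp [Fin.lt_def], rfl⟩⟩
    (fun r ⟨a, b, hab, hr⟩ => hr ▸ h a b hab)

lemma Dmin_nonneg {X : Type*} [MetricSpace X] {m : ℕ} (hm : 2 ≤ m) (x : Fin m → X) :
    0 ≤ Dmin x :=
  le_Dmin hm x (fun _ _ _ => dist_nonneg)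

theorem stmt1 {X : Type*} [MetricSpace X] {m : ℕ} (hm : 2 ≤ m)
    (x : Fin m → X) (z : X) :
    Dmin x ≤ ∑ i : Fin m, Dmin (Function.update x i z) := by
  have : Nonempty (Fin m) := ⟨⟨0, by omega⟩⟩
  obtain ⟨k, hk⟩ := Finite.exists_min (fun a : Fin m => dist (x a) z)
  set d := dist (x k) z with hd
  -- choose i ≠ k
  obtain ⟨i, hik⟩ : ∃ i : Fin m, i ≠ k := by
    rcases Nat.eq_zero_or_pos k.val with h0 | h0
    · exact ⟨⟨1, by omega⟩, by simp [Fin.ext_iff, h0]⟩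
    · exact ⟨⟨0, by omega⟩, by simp [Fin.ext_iff]; omega⟩
  -- Claim A : term at i
  have hA : min (Dmin x) d ≤ Dmin (Function.update x i z) := by
    apply le_Dmin hm
    intro a b hab
    rcases eq_or_ne a i with rfl | ha
    · have hb : b ≠ a := (ne_of_gt hab)
      rw [Function.update_self, Function.update_of_ne hb]
      calc min (Dmin x) d ≤ d := min_le_right _ _
        _ ≤ dist (x b) z := hk b
        _ = dist z (x b) := dist_comm _ _
    · rw [Function.update_of_ne ha]
      rcases eq_or_ne b i with rfl | hb
      · rw [Function.update_self]
        exact le_trans (min_le_right _ _) (hk a)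
      · rw [Function.update_of_ne hb]
        exact le_trans (min_le_left _ _) (Dmin_le x hab)
  -- Claim B : term at k
  have hB : Dmin x - d ≤ Dmin (Function.update x k z) := by
    apply le_Dmin hm
    intro a b hab
    rcases eq_or_ne a k with rfl | ha
    · have hb : b ≠ a := (ne_of_gt hab)
      rw [Function.update_self, Function.update_of_ne hb]
      have h1 : Dmin x ≤ dist (x a) (x b) := Dmin_le x hab
      have h2 : dist (x a) (x b) ≤ dist (x a) z + dist z (x b) := dist_triangle _ _ _
      simp only [hd] at *
      linarith
    · rw [Function.update_of_ne ha]
      rcases eq_or_ne b k with rfl | hb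
      · rw [Function.update_self]
        have h1 : Dmin x ≤ dist (x a) (x b) := Dmin_le x hab
        have h2 : dist (x a) (x b) ≤ dist (x a) z + dist z (x b) := dist_triangle _ _ _
        have h3 : dist z (x b) = d := by rw [hd, dist_comm]
        linarith
      · rw [Function.update_of_ne hb]
        have : (0:ℝ) ≤ d := dist_nonneg
        linarith [Dmin_le x hab]
  -- sum of two selected terms bounds the full sum
  have hsub : ∑ j ∈ ({i, k} : Finset (Fin m)), Dmin (Function.update x j z)
      ≤ ∑ j : Fin m, Dmin (Function.update x j z) :=
    Finset.sum_le_sum_of_subset_of_nonneg (Finset.subset_univ _)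
      (fun j _ _ => Dmin_nonneg hm _)
  rw [Finset.sum_pair hik] at hsub
  have hd0 : (0:ℝ) ≤ d := dist_nonneg
  rcases le_total d (Dmin x) with hc | hc
  · have : min (Dmin x) d = d := min_eq_right hc
    linarith
  · have : min (Dmin x) d = Dmin x := min_eq_left hc
    linarith [Dmin_nonneg hm (Function.update x k z)]
end

section
/- Let (X,d) be a metric space, m ≥ 2, and x = (x_1,…,x_m) ∈ X^m, z ∈ X. Writing x_{m+1} = z, suppose for each i ∈ {1,…,m} we choose indices a_i, b_i ∈ {1,…,m+1}\{i} with d(x_{a_i},x_{b_i}) = D_m(x[i→z]). If b_i = m+1 for every i, then the map i ↦ a_i from {1,…,m} to {1,…,m} is not constant (since a_i ≠ i for all i), and for any k,l with a_k ≠ a_l, D_m(x[k→z]) + D_m(x[l→z]) ≥ d(x_{a_k},x_{a_l}) ≥ D_m(x). -/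
open Filter Metric Set

theorem stmt2 {X : Type*} [MetricSpace X] {m : ℕ} (hm : 2 ≤ m)
    (x : Fin m → X) (z : X) (a b : Fin m → Fin (m + 1))
    -- `y` extends the tuple `x` by `x_{m+1} = z`
    (y : Fin (m + 1) → X) (hy : y = Fin.snoc x z)
    -- the indices `a i, b i` lie in `{1,…,m+1} \ {i}` and realize the minimum `D_m(x[i→z])`
    (hab : ∀ i : Fin m, a i ≠ b i)
    (ha : ∀ i : Fin m, a i ≠ Fin.castSucc i)
    (hb' : ∀ i : Fin m, b i ≠ Fin.castSucc i)
    (hmin : ∀ i : Fin m, dist (y (a i)) (y (b i)) = Dmin (Function.update x i z))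
    -- assumption: `b i = m+1` for every `i`
    (hblast : ∀ i : Fin m, b i = Fin.last m) :
    (¬ ∃ c : Fin (m + 1), ∀ i : Fin m, a i = c) ∧
    (∀ k l : Fin m, a k ≠ a l →
      dist (y (a k)) (y (a l)) ≤ Dmin (Function.update x k z) + Dmin (Function.update x l z) ∧
      Dmin x ≤ dist (y (a k)) (y (a l))) := by
  have hyl : y (Fin.last m) = z := by rw [hy]; simp
  have hyc : ∀ i : Fin m, y (Fin.castSucc i) = x i := fun i => by rw [hy]; simp
  constructor
  · rintro ⟨c, hc⟩
    have hcl : c ≠ Fin.last m := by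
      have h0 := hab ⟨0, by omega⟩
      rw [hc, hblast] at h0
      exact h0
    obtain ⟨j, rfl⟩ := Fin.exists_castSucc_eq.mpr hcl
    exact ha j (hc j)
  · intro k l hkl
    have hk : a k ≠ Fin.last m := by rw [← hblast k]; exact hab k
    have hl : a l ≠ Fin.last m := by rw [← hblast l]; exact hab l
    obtain ⟨i, hi⟩ := Fin.exists_castSucc_eq.mpr hk
    obtain ⟨j, hj⟩ := Fin.exists_castSucc_eq.mpr hl
    have h1 := hmin k
    have h2 := hmin l
    rw [hblast k, hyl] at h1
    rw [hblast l, hyl] at h2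
    constructor
    · calc dist (y (a k)) (y (a l))
          ≤ dist (y (a k)) z + dist z (y (a l)) :=
            dist_triangle _ _ _
        _ = Dmin (Function.update x k z) + Dmin (Function.update x l z) := by
            rw [h1, dist_comm, h2]
    · have hij : i ≠ j := by
        intro h; apply hkl; rw [← hi, ← hj, h]
      have hmem : dist (y (a k)) (y (a l)) ∈
          {r : ℝ | ∃ i j : Fin m, i < j ∧ r = dist (x i) (x j)} := by
        rw [← hi, ← hj, hyc, hyc]
        rcases lt_or_gt_of_ne hij with h | h
        · exact ⟨i, j, h, rfl⟩
        · exact ⟨j, i, h, dist_comm (x i) (x j)⟩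
      exact csInf_le ⟨0, fun r ⟨p, q, _, hr⟩ => hr ▸ dist_nonneg⟩ hmem
end

section
/- Let (X,φ) be a topological dynamical system and m ≥ 2. If every point x ∈ X is a mean m-equicontinuity point, then (X,φ) is mean m-equicontinuous: for all ε > 0 there exists δ > 0 such that D_m^max(x_1,…,x_m) < δ implies D̄_m^φ(x_1,…,x_m) < ε. -/
open Filter Metric Set

section Helpers

variable {X : Type*} [MetricSpace X] {m : ℕ}

lemma pairSet_finite (x : Fin m → X) :
    {r : ℝ | ∃ i j : Fin m, i < j ∧ r = dist (x i) (x j)}.Finite := by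
  have hsub : {r : ℝ | ∃ i j : Fin m, i < j ∧ r = dist (x i) (x j)} ⊆
      (fun p : Fin m × Fin m => dist (x p.1) (x p.2)) '' Set.univ := by
    rintro r ⟨i, j, _, rfl⟩; exact ⟨(i, j), trivial, rfl⟩
  exact (Set.finite_univ.image _).subset hsub

lemma pairSet_nonempty (hm : 2 ≤ m) (x : Fin m → X) :
    {r : ℝ | ∃ i j : Fin m, i < j ∧ r = dist (x i) (x j)}.Nonempty := by
  refine ⟨dist (x ⟨0, by omega⟩) (x ⟨1, by omega⟩), ⟨0, by omega⟩, ⟨1, by omega⟩, ?_, rfl⟩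
  simp [Fin.lt_def]

lemma dmin_le {x : Fin m → X} {i j : Fin m} (hij : i < j) :
    Dmin x ≤ dist (x i) (x j) :=
  csInf_le (pairSet_finite x).bddBelow ⟨i, j, hij, rfl⟩

lemma dmin_le' {x : Fin m → X} {i j : Fin m} (hij : i ≠ j) :
    Dmin x ≤ dist (x i) (x j) := by
  rcases lt_or_gt_of_ne hij with h | h
  · exact dmin_le h
  · rw [dist_comm]; exact dmin_le h

lemma dmin_nonneg (hm : 2 ≤ m) (x : Fin m → X) : 0 ≤ Dmin x := by
  apply le_csInf (pairSet_nonempty hm x)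
  rintro r ⟨i, j, _, rfl⟩; exact dist_nonneg

lemma dmin_achieved (hm : 2 ≤ m) (x : Fin m → X) :
    ∃ i j : Fin m, i < j ∧ Dmin x = dist (x i) (x j) :=
  (pairSet_nonempty hm x).csInf_mem (pairSet_finite x)

lemma dist_le_dmax {x : Fin m → X} {i j : Fin m} (hij : i < j) :
    dist (x i) (x j) ≤ Dmax x :=
  le_csSup (pairSet_finite x).bddAbove ⟨i, j, hij, rfl⟩

/-- Key combinatorial lemma: the minimal pairwise distance of a tuple is bounded by the
sum, over all coordinates `j`, of the minimal pairwise distances of the tuples obtained by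
replacing the `j`-th coordinate by a fixed point `y`. -/
lemma dmin_le_sum_update (hm : 2 ≤ m) (x : Fin m → X) (y : X) :
    Dmin x ≤ ∑ j : Fin m, Dmin (Function.update x j y) := by
  classical
  have key : ∀ j : Fin m,
      (∃ a b : Fin m, a ≠ j ∧ b ≠ j ∧ a ≠ b ∧
        Dmin (Function.update x j y) = dist (x a) (x b)) ∨
      (∃ b : Fin m, b ≠ j ∧ Dmin (Function.update x j y) = dist y (x b)) := by
    intro j
    obtain ⟨a, b, hab, heq⟩ := dmin_achieved hm (Function.update x j y)
    by_cases ha : a = j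
    · right
      refine ⟨b, ?_, ?_⟩
      · rw [← ha]; exact hab.ne'
      · rw [heq, ha, Function.update_self, Function.update_of_ne (by rw [← ha]; exact hab.ne')]
    · by_cases hb : b = j
      · right
        refine ⟨a, ha, ?_⟩
        rw [heq, hb, Function.update_self, Function.update_of_ne ha, dist_comm]
      · left
        exact ⟨a, b, ha, hb, hab.ne, by
          rw [heq, Function.update_of_ne ha, Function.update_of_ne hb]⟩
  have nonneg : ∀ j : Fin m, 0 ≤ Dmin (Function.update x j y) :=
    fun j => dmin_nonneg hm _
  by_cases H : ∃ j : Fin m, ∃ a b : Fin m, a ≠ j ∧ b ≠ j ∧ a ≠ b ∧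
      Dmin (Function.update x j y) = dist (x a) (x b)
  · obtain ⟨j, a, b, _, _, hab, heq⟩ := H
    calc Dmin x ≤ dist (x a) (x b) := dmin_le' hab
      _ = Dmin (Function.update x j y) := heq.symm
      _ ≤ ∑ j : Fin m, Dmin (Function.update x j y) :=
        Finset.single_le_sum (fun j _ => nonneg j) (Finset.mem_univ j)
  · push_neg at H
    have h2 : ∀ j : Fin m, ∃ b : Fin m, b ≠ j ∧
        Dmin (Function.update x j y) = dist y (x b) := by
      intro j
      rcases key j with hk | hk
      · obtain ⟨a, b, ha, hb, hab, heq⟩ := hk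
        exact absurd heq (H j a b ha hb hab)
      · exact hk
    choose b hbne hbeq using h2
    have hm0 : (0 : ℕ) < m := by omega
    set j0 : Fin m := ⟨0, hm0⟩ with hj0
    set j1 : Fin m := b j0 with hj1
    have hne01 : j0 ≠ j1 := (hbne j0).symm
    have hne1 : b j1 ≠ b j0 := hbne j1
    calc Dmin x ≤ dist (x (b j0)) (x (b j1)) := dmin_le' hne1.symm
      _ ≤ dist (x (b j0)) y + dist y (x (b j1)) := dist_triangle _ _ _
      _ = Dmin (Function.update x j0 y) + Dmin (Function.update x j1 y) := by
          rw [hbeq j0, hbeq j1, dist_comm]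
      _ = ∑ j ∈ ({j0, j1} : Finset (Fin m)), Dmin (Function.update x j y) :=
          (Finset.sum_pair (f := fun j => Dmin (Function.update x j y)) hne01).symm
      _ ≤ ∑ j : Fin m, Dmin (Function.update x j y) :=
          Finset.sum_le_sum_of_subset_of_nonneg (Finset.subset_univ _)
            (fun j _ _ => nonneg j)

variable [CompactSpace X]

lemma avg_bounds (hm : 2 ≤ m) (φ : X → X) (x : Fin m → X) (n : ℕ) :
    0 ≤ (∑ i ∈ Finset.range n, Dmin (fun j => φ^[i] (x j))) / n ∧
      (∑ i ∈ Finset.range n, Dmin (fun j => φ^[i] (x j))) / n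
        ≤ Metric.diam (Set.univ : Set X) := by
  have hC : (0:ℝ) ≤ Metric.diam (Set.univ : Set X) := Metric.diam_nonneg
  have hsum0 : (0:ℝ) ≤ ∑ i ∈ Finset.range n, Dmin (fun j => φ^[i] (x j)) :=
    Finset.sum_nonneg fun i _ => dmin_nonneg hm _
  have hsumC : ∑ i ∈ Finset.range n, Dmin (fun j => φ^[i] (x j))
      ≤ n * Metric.diam (Set.univ : Set X) := by
    calc ∑ i ∈ Finset.range n, Dmin (fun j => φ^[i] (x j))
        ≤ ∑ _i ∈ Finset.range n, Metric.diam (Set.univ : Set X) := by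
          refine Finset.sum_le_sum fun i _ => ?_
          refine le_trans (dmin_le (x := fun j => φ^[i] (x j))
            (i := ⟨0, by omega⟩) (j := ⟨1, by omega⟩) (by simp [Fin.lt_def])) ?_
          exact Metric.dist_le_diam_of_mem isCompact_univ.isBounded trivial trivial
      _ = n * Metric.diam (Set.univ : Set X) := by
          rw [Finset.sum_const, Finset.card_range, nsmul_eq_mul]
  constructor
  · exact div_nonneg hsum0 (Nat.cast_nonneg n)
  · rcases Nat.eq_zero_or_pos n with rfl | hn
    · simpa using hC
    · rw [div_le_iff₀ (by exact_mod_cast hn)]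
      calc _ ≤ (n:ℝ) * Metric.diam (Set.univ : Set X) := hsumC
        _ = Metric.diam (Set.univ : Set X) * n := mul_comm _ _

lemma limsup_finsum_le {ι : Type*} (s : Finset ι) (g : ι → ℕ → ℝ) (C : ℝ)
    (h0 : ∀ j ∈ s, ∀ n, 0 ≤ g j n) (hC : ∀ j ∈ s, ∀ n, g j n ≤ C) :
    Filter.limsup (fun n => ∑ j ∈ s, g j n) Filter.atTop
      ≤ ∑ j ∈ s, Filter.limsup (g j) Filter.atTop := by
  classical
  induction s using Finset.cons_induction with
  | empty => simp
  | cons a s ha ih =>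
    have heq : (fun n => ∑ j ∈ Finset.cons a s ha, g j n)
        = (g a) + (fun n => ∑ j ∈ s, g j n) := by
      funext n; simp only [Finset.sum_cons, Pi.add_apply]
    rw [heq, Finset.sum_cons]
    have h₁ : IsBoundedUnder (· ≥ ·) Filter.atTop (g a) :=
      isBoundedUnder_of ⟨0, fun n => h0 a (Finset.mem_cons_self a s) n⟩
    have h₂ : IsBoundedUnder (· ≤ ·) Filter.atTop (g a) :=
      isBoundedUnder_of ⟨C, fun n => hC a (Finset.mem_cons_self a s) n⟩
    have h₃' : IsBoundedUnder (· ≥ ·) Filter.atTop (fun n => ∑ j ∈ s, g j n) :=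
      isBoundedUnder_of ⟨0, fun n =>
        Finset.sum_nonneg fun j hj => h0 j (Finset.mem_cons_of_mem hj) n⟩
    have h₃ : IsCoboundedUnder (· ≤ ·) Filter.atTop (fun n => ∑ j ∈ s, g j n) :=
      h₃'.isCoboundedUnder_le
    have h₄ : IsBoundedUnder (· ≤ ·) Filter.atTop (fun n => ∑ j ∈ s, g j n) :=
      isBoundedUnder_of ⟨∑ _j ∈ s, C, fun n =>
        Finset.sum_le_sum fun j hj => hC j (Finset.mem_cons_of_mem hj) n⟩
    refine le_trans (limsup_add_le h₁ h₂ h₃ h₄) ?_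
    exact add_le_add_right (ih (fun j hj => h0 j (Finset.mem_cons_of_mem hj))
      (fun j hj => hC j (Finset.mem_cons_of_mem hj))) _

lemma dbar_le_sum_update (hm : 2 ≤ m) (φ : X → X) (x : Fin m → X) (y : X) :
    DBar φ x ≤ ∑ j : Fin m, DBar φ (Function.update x j y) := by
  classical
  set C := Metric.diam (Set.univ : Set X) with hCdef
  set g : Fin m → ℕ → ℝ := fun j n =>
    (∑ i ∈ Finset.range n, Dmin (fun k => φ^[i] (Function.update x j y k))) / n with hgdef
  have hg0 : ∀ j : Fin m, ∀ n, 0 ≤ g j n := fun j n => (avg_bounds hm φ _ n).1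
  have hgC : ∀ j : Fin m, ∀ n, g j n ≤ C := fun j n => (avg_bounds hm φ _ n).2
  have step : ∀ n : ℕ,
      (∑ i ∈ Finset.range n, Dmin (fun j => φ^[i] (x j))) / n
        ≤ ∑ j : Fin m, g j n := by
    intro n
    have hnum : (∑ i ∈ Finset.range n, Dmin (fun j => φ^[i] (x j)))
        ≤ ∑ i ∈ Finset.range n, ∑ j : Fin m,
            Dmin (fun k => φ^[i] (Function.update x j y k)) := by
      refine Finset.sum_le_sum fun i _ => ?_
      have := dmin_le_sum_update hm (fun k => φ^[i] (x k)) (φ^[i] y)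
      refine le_trans this (le_of_eq ?_)
      refine Finset.sum_congr rfl fun j _ => ?_
      congr 1
      funext k
      by_cases hk : k = j
      · subst hk; simp [Function.update_self]
      · simp [Function.update_of_ne hk]
    have hrw : ∑ j : Fin m, g j n
        = (∑ i ∈ Finset.range n, ∑ j : Fin m,
            Dmin (fun k => φ^[i] (Function.update x j y k))) / n := by
      rw [← Finset.sum_div, Finset.sum_comm]
    rw [hrw]
    exact div_le_div_of_nonneg_right hnum (Nat.cast_nonneg n) |>.trans_eq rfl
  unfold DBar
  have h1 : Filter.limsup (fun n : ℕ =>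
      (∑ i ∈ Finset.range n, Dmin (fun j => φ^[i] (x j))) / n) Filter.atTop
      ≤ Filter.limsup (fun n => ∑ j : Fin m, g j n) Filter.atTop := by
    refine limsup_le_limsup (Filter.Eventually.of_forall step) ?_ ?_
    · exact (isBoundedUnder_of
        ⟨0, fun n => (avg_bounds hm φ x n).1⟩ :
          IsBoundedUnder (· ≥ ·) Filter.atTop _).isCoboundedUnder_le
    · exact isBoundedUnder_of ⟨∑ _j : Fin m, C, fun n =>
        Finset.sum_le_sum fun j _ => hgC j n⟩
  exact h1.trans (limsup_finsum_le Finset.univ g C (fun j _ => hg0 j) (fun j _ => hgC j))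

end Helpers

theorem stmt4 {X : Type*} [MetricSpace X] [CompactSpace X] {m : ℕ} (hm : 2 ≤ m)
    (φ : X → X) (hφ : IsHomeomorph φ)
    -- every point of `X` is a mean `m`-equicontinuity point
    (h : ∀ x : X, ∀ ε > (0 : ℝ), ∃ δ > (0 : ℝ), ∀ x' : Fin m → X,
      (∃ i : Fin m, x' i = x) → (∀ j : Fin m, x' j ∈ Metric.ball x δ) → DBar φ x' < ε) :
    -- then the system is mean `m`-equicontinuous
    ∀ ε > (0 : ℝ), ∃ δ > (0 : ℝ), ∀ x : Fin m → X, Dmax x < δ → DBar φ x < ε := by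
  classical
  intro ε hε
  have hε' : (0:ℝ) < ε / (m + 1) := by positivity
  have h' : ∀ y : X, ∃ δ > (0:ℝ), ∀ x' : Fin m → X, (∃ i : Fin m, x' i = y) →
      (∀ j : Fin m, x' j ∈ Metric.ball y δ) → DBar φ x' < ε / (m + 1) :=
    fun y => h y _ hε'
  choose δf hδf hP using h'
  obtain ⟨δ, hδpos, hcov⟩ := lebesgue_number_lemma_of_metric
    (s := (Set.univ : Set X)) (c := fun y : X => Metric.ball y (δf y))
    isCompact_univ (fun y => Metric.isOpen_ball)
    (fun z _ => Set.mem_iUnion.2 ⟨z, Metric.mem_ball_self (hδf z)⟩)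
  refine ⟨δ, hδpos, fun x hx => ?_⟩
  have hm0 : (0 : ℕ) < m := by omega
  obtain ⟨y, hy⟩ := hcov (x ⟨0, hm0⟩) trivial
  have hball : ∀ j : Fin m, x j ∈ Metric.ball y (δf y) := by
    intro j
    apply hy
    rw [Metric.mem_ball]
    by_cases hj : j = ⟨0, hm0⟩
    · subst hj; simpa using hδpos
    · have h0j : (⟨0, hm0⟩ : Fin m) < j := by
        rw [Fin.lt_def]
        exact Nat.pos_of_ne_zero (fun hc => hj (Fin.ext hc))
      rw [dist_comm]
      exact lt_of_le_of_lt (dist_le_dmax h0j) hx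
  have hupd : ∀ j : Fin m, DBar φ (Function.update x j y) < ε / (m + 1) := by
    intro j
    refine hP y (Function.update x j y) ⟨j, Function.update_self j y x⟩ fun k => ?_
    by_cases hk : k = j
    · subst hk
      rw [Function.update_self]
      exact Metric.mem_ball_self (hδf y)
    · rw [Function.update_of_ne hk]
      exact hball k
  have hsum : DBar φ x ≤ ∑ j : Fin m, DBar φ (Function.update x j y) :=
    dbar_le_sum_update hm φ x y
  have huniv : (Finset.univ : Finset (Fin m)).Nonempty :=
    ⟨⟨0, hm0⟩, Finset.mem_univ _⟩
  have hlt : ∑ j : Fin m, DBar φ (Function.update x j y)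
      < ∑ _j : Fin m, ε / (m + 1) :=
    Finset.sum_lt_sum_of_nonempty huniv fun j _ => hupd j
  have hfinal : (∑ _j : Fin m, ε / (m + 1)) < ε := by
    rw [Finset.sum_const, Finset.card_univ, Fintype.card_fin, nsmul_eq_mul]
    have hmlt : (m : ℝ) < (m : ℝ) + 1 := by linarith
    calc (m : ℝ) * (ε / (m + 1)) < ((m : ℝ) + 1) * (ε / (m + 1)) := by
          exact mul_lt_mul_of_pos_right hmlt hε'
      _ = ε := by field_simp
  exact lt_of_le_of_lt hsum (lt_of_lt_of_le hlt hfinal.le)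
end

section
/- Let (X,φ) be a tds with uniquely ergodic MEF (Y,ψ) with unique invariant measure ν and factor map π: X → Y. Suppose for every φ-invariant measure μ on X the fibre measures μ_y are supported on at most m points ν-a.s. Then (X,φ) admits at most m ergodic φ-invariant measures. -/
open Filter Metric Set

open MeasureTheory

/-- The topological support of a measure. -/
def msupp {Z : Type*} [TopologicalSpace Z] [MeasurableSpace Z] (μ : Measure Z) : Set Z :=
  {z | ∀ U : Set Z, IsOpen U → z ∈ U → 0 < μ U}

open scoped ENNReal

section Helpers

lemma lintegral_eq_zero_of_null_subsets {α : Type*} [MeasurableSpace α] (μ : Measure α)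
    (f : α → ℝ≥0∞) (h : ∀ C, MeasurableSet C → C ⊆ {x | f x ≠ 0} → μ C = 0) :
    ∫⁻ x, f x ∂μ = 0 := by
  rw [MeasureTheory.lintegral_def]
  refine le_antisymm (iSup_le fun g => iSup_le fun hg => ?_) zero_le
  have : g.lintegral μ = ∑ x ∈ (∅ : Finset ℝ≥0∞), x * μ (g ⁻¹' {x}) := by
    refine SimpleFunc.lintegral_eq_of_subset _ fun x hx hμ => absurd ?_ hμ
    refine h _ (g.measurableSet_preimage _) fun y hy => ?_
    have hgy : g y = g x := hy
    intro hfy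
    exact hx (le_antisymm (by rw [← hgy]; simpa [hfy] using hg y) zero_le)
  simpa using this

lemma msupp_compl_null {Z : Type*} [TopologicalSpace Z]
    [SecondCountableTopology Z] [MeasurableSpace Z] (ρ : Measure Z) :
    ρ (msupp ρ)ᶜ = 0 := by
  refine measure_null_of_locally_null _ fun x hx => ?_
  simp only [msupp, mem_compl_iff, mem_setOf_eq, not_forall] at hx
  obtain ⟨U, hUo, hxU, hU0⟩ := hx
  exact ⟨U, mem_nhdsWithin_of_mem_nhds (hUo.mem_nhds hxU),
    by simpa [pos_iff_ne_zero, not_not] using hU0⟩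

lemma ergodic_mutuallySingular {X : Type*} [MeasurableSpace X] {φ : X → X} (hinj : Function.Injective φ)
    (hφm : Measurable φ) (hφim : ∀ A : Set X, MeasurableSet A → MeasurableSet (φ '' A))
    (μ μ' : Measure X) [IsProbabilityMeasure μ] [IsProbabilityMeasure μ']
    (he : Ergodic φ μ) (he' : Ergodic φ μ') (hne : μ ≠ μ') :
    μ ⟂ₘ μ' := by
  set lam : Measure X := (2 : ℝ≥0∞)⁻¹ • (μ + μ') with hlam
  have hlamapp : ∀ s, lam s = 2⁻¹ * (μ s + μ' s) := fun s => by
    rw [hlam]; simp [Measure.smul_apply, Measure.add_apply, mul_add]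
  haveI hlamprob : IsProbabilityMeasure lam := by
    constructor
    rw [hlamapp, measure_univ, measure_univ, one_add_one_eq_two,
      ENNReal.inv_mul_cancel two_ne_zero ENNReal.ofNat_ne_top]
  have hμinv : μ.map φ = μ := he.toMeasurePreserving.map_eq
  have hμ'inv : μ'.map φ = μ' := he'.toMeasurePreserving.map_eq
  have hlaminv : lam.map φ = lam := by
    rw [hlam, Measure.map_smul, Measure.map_add _ _ hφm, hμinv, hμ'inv]
  have hacμ : μ ≪ lam := by
    refine Measure.AbsolutelyContinuous.mk fun s hs h0 => ?_
    simp only [hlam, Measure.smul_apply, Measure.add_apply, smul_eq_mul,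
      ENNReal.inv_eq_zero, mul_eq_zero] at h0
    rcases h0 with h | h
    · exact absurd h (by norm_num)
    · exact (add_eq_zero.mp h).1
  have hacμ' : μ' ≪ lam := by
    refine Measure.AbsolutelyContinuous.mk fun s hs h0 => ?_
    simp only [hlam, Measure.smul_apply, Measure.add_apply, smul_eq_mul,
      ENNReal.inv_eq_zero, mul_eq_zero] at h0
    rcases h0 with h | h
    · exact absurd h (by norm_num)
    · exact (add_eq_zero.mp h).2
  set f : X → ℝ≥0∞ := μ.rnDeriv lam with hf
  set g : X → ℝ≥0∞ := μ'.rnDeriv lam with hg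
  have hfm : Measurable f := Measure.measurable_rnDeriv _ _
  have hgm : Measurable g := Measure.measurable_rnDeriv _ _
  have hfd : lam.withDensity f = μ :=
    (Measure.absolutelyContinuous_iff_withDensity_rnDeriv_eq).mp hacμ
  have hgd : lam.withDensity g = μ' :=
    (Measure.absolutelyContinuous_iff_withDensity_rnDeriv_eq).mp hacμ'
  -- invariance of densities
  have key : ∀ (h : X → ℝ≥0∞), Measurable h → ∀ ρ : Measure X, ρ.map φ = ρ →
      lam.withDensity h = ρ → lam.withDensity (h ∘ φ) = ρ := by
    intro h hm ρ hρinv hρ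
    ext A hA
    have hB : MeasurableSet (φ '' A) := hφim A hA
    rw [withDensity_apply _ hA]
    calc ∫⁻ x in A, (h ∘ φ) x ∂lam
        = ∫⁻ x, A.indicator (h ∘ φ) x ∂lam := (lintegral_indicator hA _).symm
      _ = ∫⁻ x, (φ '' A).indicator h (φ x) ∂lam := by
          refine lintegral_congr fun x => ?_
          by_cases hx : x ∈ A
          · simp [indicator_of_mem hx, indicator_of_mem (mem_image_of_mem φ hx)]
          · have : φ x ∉ φ '' A := fun hc => hx (by
              obtain ⟨a, ha, hax⟩ := hc; rwa [← hinj hax])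
            simp [indicator_of_notMem hx, indicator_of_notMem this]
      _ = ∫⁻ y, (φ '' A).indicator h y ∂(lam.map φ) :=
          (lintegral_map (hm.indicator hB) hφm).symm
      _ = ∫⁻ y, (φ '' A).indicator h y ∂lam := by rw [hlaminv]
      _ = ∫⁻ y in φ '' A, h y ∂lam := lintegral_indicator hB _
      _ = (lam.withDensity h) (φ '' A) := (withDensity_apply _ hB).symm
      _ = ρ (φ '' A) := by rw [hρ]
      _ = (ρ.map φ) (φ '' A) := by rw [hρinv]
      _ = ρ (φ ⁻¹' (φ '' A)) := Measure.map_apply hφm hB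
      _ = ρ A := by rw [Set.preimage_image_eq A hinj]
  have hfinv : f ∘ φ =ᵐ[lam] f := by
    have h1 := key f hfm μ hμinv hfd
    exact Measure.eq_rnDeriv (hfm.comp hφm) (Measure.MutuallySingular.zero_left)
        (by rw [zero_add, h1])
  -- f is a.e. constant wrt μ
  have hfinvμ : f ∘ φ =ᵐ[μ] f := hacμ.ae_eq hfinv
  obtain ⟨c, hc⟩ := he.ae_eq_const_of_ae_eq_comp₀ hfm.nullMeasurable hfinvμ
  set A : Set X := {x | f x = c} with hA
  have hAm : MeasurableSet A := hfm (measurableSet_singleton c)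
  have hμA : μ A = 1 := by
    refine (prob_compl_eq_zero_iff hAm).mp ?_
    have : μ {x | ¬ f x = c} = 0 := ae_iff.mp hc
    rw [hA, Set.compl_setOf]
    exact this
  -- A is a.e. invariant wrt μ'
  have hpre : φ ⁻¹' A =ᵐ[μ'] A := by
    refine (hacμ'.ae_eq hfinv).mono fun x hx => ?_
    have hx' : f (φ x) = f x := hx
    show (f (φ x) = c) = (f x = c)
    rw [hx']
  rcases he'.quasiErgodic.ae_empty_or_univ₀ hAm.nullMeasurableSet hpre with hA0 | hA1
  · -- μ' A = 0 : mutually singular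
    refine ⟨Aᶜ, hAm.compl, ?_, ?_⟩
    · exact (prob_compl_eq_zero_iff hAm).mpr hμA
    · rw [compl_compl]
      exact ae_eq_empty.mp hA0
  · -- μ' A = 1 : then μ = μ', contradiction
    exfalso
    have hμ'A : μ' A = 1 := by
      have := ae_eq_univ.mp hA1
      rwa [prob_compl_eq_zero_iff hAm] at this
    have hlamA : lam A = 1 := by
      rw [hlamapp, hμA, hμ'A, one_add_one_eq_two,
        ENNReal.inv_mul_cancel two_ne_zero ENNReal.ofNat_ne_top]
    -- f + g =ᵐ[lam] 2
    have hsum : (f + g) =ᵐ[lam] (fun _ => (2 : ℝ≥0∞)) := by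
      have h1 : lam.withDensity (f + g) = μ + μ' := by
        rw [withDensity_add_left hfm, hfd, hgd]
      have h2 : lam.withDensity (fun _ => (2 : ℝ≥0∞)) = μ + μ' := by
        rw [withDensity_const, hlam, smul_smul,
          ENNReal.mul_inv_cancel two_ne_zero ENNReal.ofNat_ne_top, one_smul]
      have e1 : (f + g) =ᵐ[lam] (μ + μ').rnDeriv lam :=
        Measure.eq_rnDeriv (hfm.add hgm) Measure.MutuallySingular.zero_left
          (by rw [zero_add, h1])
      have e2 : (fun _ => (2:ℝ≥0∞)) =ᵐ[lam] (μ + μ').rnDeriv lam :=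
        Measure.eq_rnDeriv measurable_const Measure.MutuallySingular.zero_left
          (by rw [zero_add, h2])
      exact e1.trans e2.symm
    have hcA : μ A = c * lam A := by
      rw [← hfd, withDensity_apply _ hAm,
        setLIntegral_congr_fun hAm (fun x hx => hx)]
      simp
    have hc1 : c = 1 := by
      rw [hμA, hlamA, mul_one] at hcA; exact hcA.symm
    -- show μ = μ'
    apply hne
    ext E hE
    have hμcompl : μ Aᶜ = 0 := (prob_compl_eq_zero_iff hAm).mpr hμA
    have hconull : μ' Aᶜ = 0 := (prob_compl_eq_zero_iff hAm).mpr hμ'A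
    have hμE : μ (E ∩ A) = lam (E ∩ A) := by
      rw [← hfd, withDensity_apply _ (hE.inter hAm),
        setLIntegral_congr_fun (hE.inter hAm)
          (fun x hx => hx.2), hc1]
      simp
    have hsumE : lam (E ∩ A) + μ' (E ∩ A) = lam (E ∩ A) + lam (E ∩ A) := by
      have : μ (E ∩ A) + μ' (E ∩ A) = 2 * lam (E ∩ A) := by
        rw [← hfd, ← hgd, withDensity_apply _ (hE.inter hAm),
          withDensity_apply _ (hE.inter hAm), ← lintegral_add_left hfm,
          setLIntegral_congr_fun_ae (hE.inter hAm)
            (hsum.mono (fun x hx _ => by simpa using hx)), setLIntegral_const]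
      rw [hμE] at this
      rw [this, two_mul]
    have hμ'EA : μ' (E ∩ A) = lam (E ∩ A) :=
      (ENNReal.add_right_inj (measure_lt_top lam _).ne).mp hsumE
    rw [← measure_inter_conull hμcompl, ← measure_inter_conull hconull, hμE, hμ'EA]

end Helpers

theorem stmt14 {X Y : Type*} [MetricSpace X] [CompactSpace X] [MetricSpace Y] [CompactSpace Y]
    [MeasurableSpace X] [BorelSpace X] [MeasurableSpace Y] [BorelSpace Y] {m : ℕ}
    (φ : X → X) (hφ : IsHomeomorph φ) (ψ : Y → Y) (hψ : IsHomeomorph ψ)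
    (π : X → Y) (hπ : Continuous π) (hπsurj : Function.Surjective π)
    (hfac : π ∘ φ = ψ ∘ π)
    -- `(Y,ψ)` is uniquely ergodic with invariant measure `ν`
    (ν : Measure Y) [IsProbabilityMeasure ν] (hν : ν.map ψ = ν)
    (hue : ∀ ν' : Measure Y, IsProbabilityMeasure ν' → ν'.map ψ = ν' → ν' = ν)
    -- for every invariant measure, the fibre measures are supported on at most `m` points a.s.
    (h : ∀ μ : Measure X, IsProbabilityMeasure μ → μ.map φ = μ →
      ∃ μy : Y → Measure X, (∀ᵐ y ∂ν, IsProbabilityMeasure (μy y)) ∧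
        (∀ A : Set X, MeasurableSet A → μ A = ∫⁻ y, μy y A ∂ν) ∧
        (∀ᵐ y ∂ν, μy y (π ⁻¹' {y}) = 1) ∧
        (∀ᵐ y ∂ν, (msupp (μy y)).encard ≤ (m : ℕ∞))) :
    -- then there are at most `m` ergodic invariant measures on `X`
    {μ : Measure X | IsProbabilityMeasure μ ∧ μ.map φ = μ ∧ Ergodic φ μ}.encard ≤ (m : ℕ∞) := by
  classical
  by_contra hcon
  push_neg at hcon
  set S : Set (Measure X) :=
    {μ : Measure X | IsProbabilityMeasure μ ∧ μ.map φ = μ ∧ Ergodic φ μ} with hSdef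
  have hm1 : ((m + 1 : ℕ) : ℕ∞) ≤ S.encard := by
    push_cast
    exact ENat.add_one_le_iff (by simp) |>.mpr hcon
  obtain ⟨t, htsub, htcard⟩ := Set.exists_subset_encard_eq hm1
  have htfin : t.Finite := Set.encard_ne_top_iff.mp (by
    rw [htcard]
    exact ENat.coe_ne_top _)
  have htc : htfin.toFinset.card = m + 1 := by
    have := htfin.encard_eq_coe_toFinset_card
    rw [htcard] at this
    exact_mod_cast this.symm
  set e := htfin.toFinset.equivFinOfCardEq htc with he
  set μs : Fin (m + 1) → Measure X := fun i => (e.symm i : Measure X) with hμs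
  have hμsinj : Function.Injective μs := fun i j hij => by
    apply e.symm.injective
    exact Subtype.ext hij
  have hμsS : ∀ i, μs i ∈ S := fun i => htsub (htfin.mem_toFinset.mp (e.symm i).2)
  have hμsprob : ∀ i, IsProbabilityMeasure (μs i) := fun i => (hμsS i).1
  have hμsinv : ∀ i, (μs i).map φ = μs i := fun i => (hμsS i).2.1
  have hμserg : ∀ i, Ergodic φ (μs i) := fun i => (hμsS i).2.2
  -- basic measurability facts
  have hφm : Measurable φ := hφ.continuous.measurable
  have hψm : Measurable ψ := hψ.continuous.measurable
  have hπm : Measurable π := hπ.measurable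
  obtain ⟨Φ, hΦ⟩ := isHomeomorph_iff_exists_homeomorph.mp hφ
  have hφim : ∀ A : Set X, MeasurableSet A → MeasurableSet (φ '' A) := by
    intro A hA
    have : φ '' A = Φ.symm ⁻¹' A := by
      rw [← hΦ]
      exact Equiv.image_eq_preimage_symm Φ.toEquiv A
    rw [this]
    exact Φ.symm.continuous.measurable hA
  -- pairwise mutual singularity
  have hsing : ∀ i j : Fin (m + 1), i ≠ j → μs i ⟂ₘ μs j := by
    intro i j hij
    haveI := hμsprob i; haveI := hμsprob j
    exact ergodic_mutuallySingular hφ.injective hφm hφim _ _ (hμserg i) (hμserg j)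
      (fun hc => hij (hμsinj hc))
  -- choose the singularity witnesses
  have hsing' : ∀ i j : Fin (m + 1), ∃ s : Set X,
      i ≠ j → MeasurableSet s ∧ μs i s = 0 ∧ μs j sᶜ = 0 := by
    intro i j
    by_cases hij : i ≠ j
    · obtain ⟨s, hsm, h1, h2⟩ := hsing i j hij
      exact ⟨s, fun _ => ⟨hsm, h1, h2⟩⟩
    · exact ⟨∅, fun hc => absurd hc hij⟩
  choose sij hsij using hsing'
  -- the disjoint carriers
  set Xk : Fin (m + 1) → Set X := fun k =>
    (⋂ j, ⋂ (_ : j ≠ k), sij j k) ∩ (⋂ j, ⋂ (_ : j ≠ k), (sij k j)ᶜ) with hXk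
  have hXkm : ∀ k, MeasurableSet (Xk k) := by
    intro k
    refine MeasurableSet.inter ?_ ?_ <;>
        refine MeasurableSet.iInter fun j => MeasurableSet.iInter fun hj => ?_ <;>
      first
      | exact (hsij j k hj).1
      | exact (hsij k j (Ne.symm hj)).1.compl
  have hXkcompl : ∀ k, μs k (Xk k)ᶜ = 0 := by
    intro k
    rw [hXk]
    simp only [Set.compl_inter]
    refine measure_union_null ?_ ?_ <;>
      · rw [Set.compl_iInter]
        refine measure_iUnion_null fun j => ?_
        rw [Set.compl_iInter]
        refine measure_iUnion_null fun hj => ?_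
        first
        | exact (hsij j k hj).2.2
        | simpa using (hsij k j (Ne.symm hj)).2.1
  have hXkk : ∀ k, μs k (Xk k) = 1 := by
    intro k
    haveI := hμsprob k
    exact (prob_compl_eq_zero_iff (hXkm k)).mp (hXkcompl k)
  have hXother : ∀ k j, j ≠ k → μs j (Xk k) = 0 := by
    intro k j hjk
    refine measure_mono_null ?_ (hsij j k hjk).2.1
    intro x hx
    have := hx.1
    exact Set.mem_iInter.mp (Set.mem_iInter.mp this j) hjk
  have hdisj : ∀ k l : Fin (m + 1), k ≠ l → Disjoint (Xk k) (Xk l) := by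
    intro k l hkl
    rw [Set.disjoint_left]
    intro x hxk hxl
    have h1 : x ∈ (sij k l)ᶜ :=
      Set.mem_iInter.mp (Set.mem_iInter.mp hxk.2 l) (fun hc => hkl hc.symm)
    have h2 : x ∈ sij k l := Set.mem_iInter.mp (Set.mem_iInter.mp hxl.1 k) hkl
    exact h1 h2
  -- the average measure
  set M : ℝ≥0∞ := ((m + 1 : ℕ) : ℝ≥0∞) with hM
  have hM0 : M ≠ 0 := by simp [hM]
  have hMtop : M ≠ ⊤ := by simp [hM]
  set μ : Measure X := M⁻¹ • ∑ k, μs k with hμ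
  have hμapp : ∀ s : Set X, μ s = M⁻¹ * ∑ k, μs k s := by
    intro s
    rw [hμ]
    simp [Measure.smul_apply, Measure.finset_sum_apply]
  haveI hμprob : IsProbabilityMeasure μ := by
    constructor
    rw [hμapp]
    simp only [measure_univ, Finset.sum_const, Finset.card_univ, Fintype.card_fin, nsmul_eq_mul,
      mul_one]
    exact ENNReal.inv_mul_cancel hM0 hMtop
  have hμinv : μ.map φ = μ := by
    ext A hA
    rw [Measure.map_apply hφm hA, hμapp, hμapp]
    congr 1
    refine Finset.sum_congr rfl fun k _ => ?_
    rw [← Measure.map_apply hφm hA, hμsinv k]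
  -- projections of the ergodic measures are ν
  have hproj : ∀ k, (μs k).map π = ν := by
    intro k
    haveI := hμsprob k
    haveI : IsProbabilityMeasure ((μs k).map π) := Measure.isProbabilityMeasure_map hπm.aemeasurable
    refine hue _ this ?_
    rw [Measure.map_map hψm hπm, ← hfac, ← Measure.map_map hπm hφm, hμsinv k]
  -- disintegration of μ
  obtain ⟨μy, hprob_y, hint, hfib, hsupp⟩ := h μ hμprob hμinv
  -- the key integral identity
  have hkey : ∀ k, ∀ B : Set Y, MeasurableSet B →
      ∫⁻ y in B, μy y (Xk k) ∂ν = M⁻¹ * ν B := by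
    intro k B hB
    have hμXB : μ (Xk k ∩ π ⁻¹' B) = M⁻¹ * ν B := by
      rw [hμapp]
      congr 1
      rw [Finset.sum_eq_single k]
      · rw [Set.inter_comm, measure_inter_conull (hXkcompl k),
          ← Measure.map_apply hπm hB, hproj k]
      · intro j _ hjk
        exact measure_mono_null Set.inter_subset_left (hXother k j hjk)
      · simp
    have hae : (fun y => μy y (Xk k ∩ π ⁻¹' B)) =ᵐ[ν]
        B.indicator (fun y => μy y (Xk k)) := by
      filter_upwards [hprob_y, hfib] with y hy1 hy2
      haveI := hy1
      by_cases hyB : y ∈ B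
      · rw [Set.indicator_of_mem hyB]
        have hcompl : μy y (π ⁻¹' B)ᶜ = 0 := by
          have hsub : (π ⁻¹' B)ᶜ ⊆ (π ⁻¹' {y})ᶜ := by
            intro z hz hzc
            exact hz (by simpa using Set.mem_singleton_iff.mp hzc ▸ hyB)
          refine measure_mono_null hsub ?_
          exact (prob_compl_eq_zero_iff (hπm (measurableSet_singleton y))).mpr hy2
        exact measure_inter_conull hcompl
      · rw [Set.indicator_of_notMem hyB]
        refine measure_mono_null ?_ ((prob_compl_eq_zero_iff
          (hπm (measurableSet_singleton y))).mpr hy2)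
        intro z hz hzc
        exact hyB (by simpa using Set.mem_singleton_iff.mp hzc ▸ hz.2)
    rw [← lintegral_indicator hB, ← lintegral_congr_ae hae,
      ← hint _ ((hXkm k).inter (hπm hB)), hμXB]
  -- a.e. positivity of the fibre measures of the carriers
  have hzero : ∀ k, ∀ᵐ y ∂ν, μy y (Xk k) ≠ 0 := by
    intro k
    set Sk : Set Y := {y | μy y (Xk k) = 0} with hSk
    set B : Set Y := toMeasurable ν Sk with hB
    have hBm : MeasurableSet B := measurableSet_toMeasurable ν Sk
    have hSB : Sk ⊆ B := subset_toMeasurable ν Sk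
    have hBeq : ν B = ν Sk := measure_toMeasurable Sk
    have hint0 : ∫⁻ y in B, μy y (Xk k) ∂ν = 0 := by
      refine lintegral_eq_zero_of_null_subsets _ _ fun C hC hCsub => ?_
      rw [Measure.restrict_apply hC]
      by_contra hpos
      have hsub2 : Sk ⊆ B \ (C ∩ B) := by
        intro y hy
        refine ⟨hSB hy, fun hc => ?_⟩
        exact (hCsub hc.1) hy
      have h1 : ν B ≤ ν (B \ (C ∩ B)) := hBeq.trans_le (measure_mono hsub2)
      have h2 : ν (C ∩ B) + ν (B \ (C ∩ B)) = ν B := by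
        have h := measure_inter_add_diff (μ := ν) B (hC.inter hBm)
        rwa [Set.inter_eq_right.mpr Set.inter_subset_right] at h
      have h3 : ν (C ∩ B) + ν B ≤ ν B := by
        calc ν (C ∩ B) + ν B ≤ ν (C ∩ B) + ν (B \ (C ∩ B)) := by gcongr
          _ = ν B := h2
      have : ν (C ∩ B) = 0 := by
        by_contra hne
        have : 0 + ν B < ν (C ∩ B) + ν B :=
          ENNReal.add_lt_add_right (measure_ne_top ν B) (pos_iff_ne_zero.mpr hne)
        simp only [zero_add] at this
        exact absurd h3 (not_le.mpr this)
      exact hpos this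
    rw [hkey k B hBm] at hint0
    have hνB : ν B = 0 := by
      rcases mul_eq_zero.mp hint0 with h0 | h0
      · exact absurd h0 (by simp [hM, ENNReal.inv_eq_zero])
      · exact h0
    have : ν Sk = 0 := by rw [← hBeq]; exact hνB
    rw [ae_iff]
    simpa [hSk, not_not] using this
  -- pick a good fibre
  have hall : ∀ᵐ y ∂ν, IsProbabilityMeasure (μy y) ∧ (msupp (μy y)).encard ≤ (m : ℕ∞) ∧
      ∀ k, μy y (Xk k) ≠ 0 := by
    filter_upwards [hprob_y, hsupp, ae_all_iff.mpr hzero] with y h1 h2 h3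
    exact ⟨h1, h2, h3⟩
  haveI : (MeasureTheory.ae ν).NeBot := ae_neBot.mpr (IsProbabilityMeasure.ne_zero ν)
  obtain ⟨y, hy1, hy2, hy3⟩ := hall.exists
  haveI := hy1
  set F : Set X := msupp (μy y) with hF
  have hFnull : μy y Fᶜ = 0 := msupp_compl_null (μy y)
  have hFfin : F.Finite := Set.encard_ne_top_iff.mp (fun hc => by
    rw [hc] at hy2
    exact absurd hy2 (by simp))
  have hpick : ∀ k, ∃ x, x ∈ Xk k ∩ F := by
    intro k
    by_contra hc
    push_neg at hc
    have hsub : Xk k ⊆ Fᶜ := fun x hx hxF => hc x ⟨hx, hxF⟩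
    exact hy3 k (measure_mono_null hsub hFnull)
  choose xk hxk using hpick
  have hxkinj : Function.Injective xk := by
    intro k l hkl
    by_contra hne
    exact Set.disjoint_left.mp (hdisj k l hne) (hxk k).1 (hkl ▸ (hxk l).1)
  -- cardinality contradiction
  have himg : (Finset.univ.image xk) ⊆ hFfin.toFinset := by
    intro x hx
    obtain ⟨k, _, rfl⟩ := Finset.mem_image.mp hx
    exact hFfin.mem_toFinset.mpr (hxk k).2
  have hcard1 : (Finset.univ.image xk).card = m + 1 := by
    rw [Finset.card_image_of_injective _ hxkinj, Finset.card_univ, Fintype.card_fin]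
  have hcard2 : hFfin.toFinset.card ≤ m := by
    have := hFfin.encard_eq_coe_toFinset_card
    rw [this] at hy2
    exact_mod_cast hy2
  have := Finset.card_le_card himg
  omega
end

section
/- Let f: [0,1] → [0,1] be a homeomorphism with finitely many fixed points 0 = x_0 < x_1 < … < x_k = 1 such that lim_{n→∞} f^n(x) = x_i for all x ∈ (x_{i-1}, x_i] and each i ∈ {1,…,k}. Then ([0,1], f) is mean 3-equicontinuous: for all ε > 0 there exists δ > 0 such that whenever |x-y|, |y-z|, |x-z| < δ, limsup_{n→∞} (1/n) Σ_{i=0}^{n-1} min{|f^i(x)-f^i(y)|, |f^i(y)-f^i(z)|, |f^i(x)-f^i(z)|} < ε. -/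
open Filter Metric Set

theorem stmt18 {k : ℕ} (hk : 1 ≤ k)
    (f : unitInterval → unitInterval) (hf : IsHomeomorph f)
    (x : Fin (k + 1) → unitInterval) (hmono : StrictMono x)
    (h0 : x 0 = 0) (h1 : x (Fin.last k) = 1)
    -- the `x i` are exactly the fixed points of `f`
    (hfix : ∀ i, f (x i) = x i)
    (honly : ∀ z : unitInterval, f z = z → ∃ i, z = x i)
    -- every point of `(x_{i-1}, x_i]` converges to `x_i` under forward iteration
    (hconv : ∀ i : Fin k, ∀ z : unitInterval,
      x i.castSucc < z → z ≤ x i.succ →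
      Filter.Tendsto (fun n => f^[n] z) Filter.atTop (nhds (x i.succ))) :
    -- then `([0,1], f)` is mean `3`-equicontinuous
    ∀ ε > (0 : ℝ), ∃ δ > (0 : ℝ), ∀ p : Fin 3 → unitInterval,
      Dmax p < δ → DBar f p < ε := by
  classical
  intro ε hε
  -- each point has a "class": a minimal index i with z ≤ x i, and its orbit converges to x i
  have hclass : ∀ z : unitInterval, ∃ i : Fin (k+1),
      z ≤ x i ∧ (∀ j, j < i → x j < z) ∧
      Filter.Tendsto (fun n => f^[n] z) Filter.atTop (nhds (x i)) := by
    intro z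
    have hsne : (Finset.univ.filter (fun i : Fin (k+1) => z ≤ x i)).Nonempty := by
      refine ⟨Fin.last k, ?_⟩
      simp only [Finset.mem_filter, Finset.mem_univ, true_and, h1]
      exact z.2.2
    set i := (Finset.univ.filter (fun i : Fin (k+1) => z ≤ x i)).min' hsne with hi
    have hmem := (Finset.univ.filter (fun i : Fin (k+1) => z ≤ x i)).min'_mem hsne
    rw [Finset.mem_filter] at hmem
    have hle : z ≤ x i := hmem.2
    have hlt : ∀ j, j < i → x j < z := by
      intro j hj
      by_contra h
      push_neg at h
      have : i ≤ j := Finset.min'_le _ _ (by simp [h])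
      exact absurd hj (not_lt.mpr this)
    refine ⟨i, hle, hlt, ?_⟩
    by_cases h : i = 0
    · have hz0 : z = x i := by
        apply le_antisymm hle
        rw [h, h0]; exact z.2.1
      have : ∀ n, f^[n] z = z := fun n =>
        Function.iterate_fixed (by rw [hz0, h, hfix]) n
      simp only [this, ← hz0]
      exact tendsto_const_nhds
    · obtain ⟨i', hi'⟩ := Fin.eq_succ_of_ne_zero h
      rw [hi'] at hle hlt ⊢
      exact hconv i' z (hlt _ (Fin.castSucc_lt_succ : i'.castSucc < i'.succ)) hle
  -- minimal gap between consecutive fixed points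
  have hkpos : 0 < k := hk
  obtain ⟨i0, -, hi0⟩ := Finset.exists_min_image (Finset.univ : Finset (Fin k))
    (fun i => (x i.succ : ℝ) - x i.castSucc) ⟨⟨0, hkpos⟩, Finset.mem_univ _⟩
  set δ : ℝ := (x i0.succ : ℝ) - x i0.castSucc with hδ
  have hδpos : 0 < δ := by
    have := hmono (Fin.castSucc_lt_succ : i0.castSucc < i0.succ)
    have : (x i0.castSucc : ℝ) < x i0.succ := this
    linarith
  have hδle : ∀ i : Fin k, δ ≤ (x i.succ : ℝ) - x i.castSucc := fun i =>
    hi0 i (Finset.mem_univ i)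
  refine ⟨δ, hδpos, ?_⟩
  intro p hp
  -- Dmax dominates all pairwise distances
  have hDmax : ∀ a b : Fin 3, a < b → dist (p a) (p b) ≤ Dmax p := by
    intro a b hab
    apply le_csSup
    · have hfin : {r : ℝ | ∃ i j : Fin 3, i < j ∧ r = dist (p i) (p j)}.Finite := by
        apply (Set.finite_range (fun q : Fin 3 × Fin 3 => dist (p q.1) (p q.2))).subset
        rintro r ⟨i, j, -, rfl⟩
        exact ⟨(i, j), rfl⟩
      exact hfin.bddAbove
    · exact ⟨a, b, hab, rfl⟩
  -- separation: classes of two of the three points cannot differ by ≥ 2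
  have hsep : ∀ a b : Fin 3, a ≠ b → ∀ ca cb : Fin (k+1),
      p a ≤ x ca → (∀ j, j < cb → x j < p b) → cb.val < ca.val + 2 := by
    intro a b hab ca cb hca hcb
    by_contra h
    push_neg at h
    have hck : ca.val < k := by have := cb.isLt; omega
    set j : Fin k := ⟨ca.val, hck⟩ with hj
    have h1' : p a ≤ x j.castSucc := by
      have : j.castSucc = ca := Fin.ext rfl
      rwa [this]
    have h2' : x j.succ < p b := by
      apply hcb
      rw [Fin.lt_def]
      simp only [Fin.val_succ]
      show ca.val + 1 < cb.val
      omega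
    have hd : δ ≤ dist (p a) (p b) := by
      have h3 : ((p a : ℝ)) ≤ (x j.castSucc : ℝ) := h1'
      have h4 : ((x j.succ : ℝ)) < (p b : ℝ) := h2'
      calc δ ≤ (x j.succ : ℝ) - x j.castSucc := hδle j
        _ ≤ (p b : ℝ) - p a := by linarith
        _ ≤ |(p a : ℝ) - p b| := by rw [abs_sub_comm]; exact le_abs_self _
        _ = dist (p a) (p b) := by rw [Subtype.dist_eq, Real.dist_eq]
    have hD : dist (p a) (p b) ≤ Dmax p := by
      rcases hab.lt_or_gt with h' | h'
      · exact hDmax a b h'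
      · rw [dist_comm]; exact hDmax b a h'
    linarith
  -- classes of the three points
  obtain ⟨c0, hle0, hlt0, ht0⟩ := hclass (p 0)
  obtain ⟨c1, hle1, hlt1, ht1⟩ := hclass (p 1)
  obtain ⟨c2, hle2, hlt2, ht2⟩ := hclass (p 2)
  have h01 := hsep 0 1 (by decide) c0 c1 hle0 hlt1
  have h10 := hsep 1 0 (by decide) c1 c0 hle1 hlt0
  have h02 := hsep 0 2 (by decide) c0 c2 hle0 hlt2
  have h20 := hsep 2 0 (by decide) c2 c0 hle2 hlt0
  have h12 := hsep 1 2 (by decide) c1 c2 hle1 hlt2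
  have h21 := hsep 2 1 (by decide) c2 c1 hle2 hlt1
  -- pigeonhole: two of the three classes coincide
  have hpigeon : c0 = c1 ∨ c0 = c2 ∨ c1 = c2 := by
    have : c0.val = c1.val ∨ c0.val = c2.val ∨ c1.val = c2.val := by omega
    rcases this with h | h | h
    · exact Or.inl (Fin.ext h)
    · exact Or.inr (Or.inl (Fin.ext h))
    · exact Or.inr (Or.inr (Fin.ext h))
  -- extract a pair a < b converging to the same fixed point
  obtain ⟨a, b, hab, hta, htb, L, htaL, htbL⟩ :
      ∃ a b : Fin 3, a < b ∧ True ∧ True ∧ ∃ L : unitInterval,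
        Filter.Tendsto (fun n => f^[n] (p a)) Filter.atTop (nhds L) ∧
        Filter.Tendsto (fun n => f^[n] (p b)) Filter.atTop (nhds L) := by
    rcases hpigeon with h | h | h
    · exact ⟨0, 1, by decide, trivial, trivial, x c0, ht0, h ▸ ht1⟩
    · exact ⟨0, 2, by decide, trivial, trivial, x c0, ht0, h ▸ ht2⟩
    · exact ⟨1, 2, by decide, trivial, trivial, x c1, ht1, h ▸ ht2⟩
  -- distance between the two orbits goes to 0
  have hdist0 : Filter.Tendsto (fun n => dist (f^[n] (p a)) (f^[n] (p b)))
      Filter.atTop (nhds 0) := by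
    have := htaL.dist htbL
    simpa using this
  -- Dmin bounds
  have hDmin_nonneg : ∀ n, 0 ≤ Dmin (fun j => f^[n] (p j)) := by
    intro n
    refine le_csInf ⟨dist (f^[n] (p a)) (f^[n] (p b)), ⟨a, b, hab, rfl⟩⟩ ?_
    rintro r ⟨i, j, -, rfl⟩
    exact dist_nonneg
  have hDmin_le : ∀ n, Dmin (fun j => f^[n] (p j)) ≤
      dist (f^[n] (p a)) (f^[n] (p b)) := by
    intro n
    apply csInf_le
    · refine ⟨0, ?_⟩
      rintro r ⟨i, j, -, rfl⟩
      exact dist_nonneg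
    · exact ⟨a, b, hab, rfl⟩
  have hDmin0 : Filter.Tendsto (fun n => Dmin (fun j => f^[n] (p j)))
      Filter.atTop (nhds 0) :=
    squeeze_zero hDmin_nonneg hDmin_le hdist0
  -- Cesàro means tend to 0, so the limsup is 0 < ε
  have hces := hDmin0.cesaro
  have : DBar f p = 0 := by
    unfold DBar
    simpa [div_eq_inv_mul] using hces.limsup_eq
  rw [this]
  exact hε
end
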